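/- Let X be a characteristic subspace of V for a nilpotent f, with exponent decomposition V = ⟨U_{a_1}⟩ ⊕ ⋯ ⊕ ⟨U_{a_m}⟩. Then X̃ = (X ∩ ⟨U_{a_1}⟩) ⊕ ⋯ ⊕ (X ∩ ⟨U_{a_m}⟩) is the largest hyperinvariant subspace of V contained in X. -/

import Mathlib

open LinearMap

variable {K : Type*} [Field K] {V : Type*} [AddCommGroup V] [Module K V]

/-- `X` is hyperinvariant for `f`: invariant under every endomorphism commuting with `f`. -/
def Hinv (f : V →ₗ[K] V) (X : Submodule K V) : Prop :=
  ∀ g : V →ₗ[K] V, g ∘ₗ f = f ∘ₗ g → X.map g ≤ X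

/-- `X` is characteristic for `f`: `f`-invariant and fixed by every automorphism commuting with `f`. -/
def Chinv (f : V →ₗ[K] V) (X : Submodule K V) : Prop :=
  X.map f ≤ X ∧
    ∀ α : V ≃ₗ[K] V, (α : V →ₗ[K] V) ∘ₗ f = f ∘ₗ (α : V →ₗ[K] V) →
      X.map (α : V →ₗ[K] V) = X

/-- The cyclic subspace generated by `x`. -/
def cyc (f : V →ₗ[K] V) (x : V) : Submodule K V :=
  Submodule.span K (Set.range fun i : ℕ => (f ^ i) x)

/-- `x` has exponent `ℓ`. -/
def ExpEq (f : V →ₗ[K] V) (x : V) (ℓ : ℕ) : Prop :=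
  (f ^ ℓ) x = 0 ∧ ∀ j < ℓ, (f ^ j) x ≠ 0

/-- `x` has height `q`. -/
def HeightEq (f : V →ₗ[K] V) (x : V) (q : ℕ) : Prop :=
  x ∈ LinearMap.range (f ^ q) ∧ x ∉ LinearMap.range (f ^ (q + 1))

/-- The `r`-th Ulm invariant: number of Jordan blocks of size `r` (for `r ≥ 1`). -/
noncomputable def ulm (f : V →ₗ[K] V) (r : ℕ) : ℕ :=
  Module.finrank K ↥(LinearMap.ker f ⊓ LinearMap.range (f ^ (r - 1))) -
    Module.finrank K ↥(LinearMap.ker f ⊓ LinearMap.range (f ^ r))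

/-- `u` is a generator tuple with exponents `t`. -/
def IsGenTuple {k : ℕ} (f : V →ₗ[K] V) (u : Fin k → V) (t : Fin k → ℕ) : Prop :=
  (∀ i, ExpEq f (u i) (t i)) ∧ DirectSum.IsInternal (fun i => cyc f (u i))

/-- The summand `⟨U_a⟩` of all cyclic subspaces whose generator has exponent `a`. -/
def subU {k : ℕ} (f : V →ₗ[K] V) (u : Fin k → V) (t : Fin k → ℕ) (a : ℕ) : Submodule K V :=
  ⨆ i ∈ {i : Fin k | t i = a}, cyc f (u i)

/-!
Work in the Jordan basis `f ^ l (u i)` and with the block maps `shift m j`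
(`f ^ l (u m) ↦ f ^ l (u j)`, zero on the other blocks), which commute with `f` when
`t j ≤ t m`. If `N * N = 0` and `N` commutes with `f`, then `1 + N` is an automorphism commuting
with `f`, so a characteristic `X` is `N`-stable. For `m ≠ j` with `t m = t j`, the maps
`shift m j` and `shift j m` square to zero and compose to the projection `shift j j`; hence
`X ∩ ⟨U_a⟩` splits along the cyclic summands and `X̃ = ⊕ᵢ (X ∩ cyc f (u i))`. For `g` commuting
with `f`, `shift j j * g * shift i i` squares to zero when `i ≠ j`, while on `cyc f (u i)` the
map `shift i i * g` is a polynomial in `f`; so `X̃` is hyperinvariant. Conversely, a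
hyperinvariant `W ≤ X` is stable under the projections `shift i i`, so `W ≤ X̃`.
-/

section Cyclic

variable {f : Module.End K V}

lemma pow_apply_mem_cyc (f : Module.End K V) (x : V) (n : ℕ) : (f ^ n) x ∈ cyc f x :=
  Submodule.subset_span ⟨n, rfl⟩

lemma cyc_le_of_mem {W : Submodule K V} (hW : W.map f ≤ W) {x : V} (hx : x ∈ W) : cyc f x ≤ W := by
  refine Submodule.span_le.2 ?_
  rintro _ ⟨n, rfl⟩
  induction n with
  | zero => simpa using hx
  | succ n ih =>
    change (f ^ (n + 1)) x ∈ W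
    rw [pow_succ', Module.End.mul_apply]
    exact hW ⟨_, ih, rfl⟩

lemma cyc_le_eqLocus {g₁ g₂ : Module.End K V} (h₁ : Commute g₁ f) (h₂ : Commute g₂ f) {x : V}
    (hx : g₁ x = g₂ x) : cyc f x ≤ LinearMap.eqLocus g₁ g₂ := by
  refine Submodule.span_le.2 ?_
  rintro _ ⟨n, rfl⟩
  change g₁ ((f ^ n) x) = g₂ ((f ^ n) x)
  rw [← Module.End.mul_apply, (h₁.pow_right n).eq, ← Module.End.mul_apply, (h₂.pow_right n).eq,
    Module.End.mul_apply, Module.End.mul_apply, hx]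

lemma mem_cyc_iff {x z : V} : z ∈ cyc f x ↔ ∃ p : Polynomial K, Polynomial.aeval f p x = z := by
  constructor
  · intro hz
    induction hz using Submodule.span_induction with
    | mem z hz => obtain ⟨n, rfl⟩ := hz; exact ⟨Polynomial.X ^ n, by simp⟩
    | zero => exact ⟨0, by simp⟩
    | add y z _ _ hy hz =>
      obtain ⟨p, rfl⟩ := hy; obtain ⟨q, rfl⟩ := hz; exact ⟨p + q, by simp⟩
    | smul c z _ hz => obtain ⟨p, rfl⟩ := hz; exact ⟨c • p, by simp⟩
  · rintro ⟨p, rfl⟩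
    rw [Polynomial.aeval_eq_sum_range, LinearMap.sum_apply]
    exact Submodule.sum_mem _ fun n _ => Submodule.smul_mem _ _ (pow_apply_mem_cyc f x n)

lemma commute_aeval (f : Module.End K V) (p : Polynomial K) : Commute (Polynomial.aeval f p) f := by
  simpa using (Commute.all p Polynomial.X).map (Polynomial.aeval f)

end Cyclic

namespace ExpEq

variable {f : Module.End K V} {x : V} {ℓ : ℕ}

lemma pow_apply_eq_zero (hx : ExpEq f x ℓ) {n : ℕ} (hn : ℓ ≤ n) : (f ^ n) x = 0 := by
  rw [← Nat.sub_add_cancel hn, pow_add, Module.End.mul_apply, hx.1, map_zero]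

-- Applying `f ^ (ℓ - 1 - l)` kills every `f ^ i x` with `i > l`; the coefficients with `i < l`
-- vanish by induction, leaving `c l • f ^ (ℓ - 1) x = 0`.
lemma linearIndependent (hx : ExpEq f x ℓ) :
    LinearIndependent K fun l : Fin ℓ => (f ^ (l : ℕ)) x := by
  rw [Fintype.linearIndependent_iff]
  intro c hc l
  induction l using WellFoundedLT.induction with
  | _ l ih =>
    have hkill : ∀ i : Fin ℓ, i ≠ l → c i • (f ^ (ℓ - 1 - l + i)) x = 0 := by
      intro i hi
      rcases lt_or_gt_of_ne hi with h | h
      · rw [ih i h, zero_smul]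
      · rw [hx.pow_apply_eq_zero (by omega), smul_zero]
    have hsum := congrArg (f ^ (ℓ - 1 - l)) hc
    simp only [map_sum, map_smul, ← Module.End.mul_apply, ← pow_add, map_zero] at hsum
    rw [Finset.sum_eq_single l (fun i _ hi => hkill i hi) (by simp),
      show ℓ - 1 - l + l = ℓ - 1 by omega] at hsum
    exact (smul_eq_zero.1 hsum).resolve_right (hx.2 _ (Nat.sub_one_lt_of_lt l.isLt))

lemma cyc_eq_span (hx : ExpEq f x ℓ) :
    cyc f x = Submodule.span K (Set.range fun l : Fin ℓ => (f ^ (l : ℕ)) x) := by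
  refine le_antisymm (Submodule.span_le.2 ?_) (Submodule.span_mono ?_)
  · rintro _ ⟨n, rfl⟩
    rcases lt_or_ge n ℓ with hn | hn
    · exact Submodule.subset_span ⟨⟨n, hn⟩, rfl⟩
    · simp [hx.pow_apply_eq_zero hn]
  · rintro _ ⟨l, rfl⟩
    exact ⟨l, rfl⟩

noncomputable def basis (hx : ExpEq f x ℓ) : Module.Basis (Fin ℓ) K (cyc f x) :=
  (Module.Basis.span hx.linearIndependent).map (LinearEquiv.ofEq _ _ hx.cyc_eq_span.symm)

lemma coe_basis (hx : ExpEq f x ℓ) (l : Fin ℓ) : (hx.basis l : V) = (f ^ (l : ℕ)) x := by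
  simp [basis]

end ExpEq

namespace IsGenTuple

variable {f : Module.End K V} {k : ℕ} {u : Fin k → V} {t : Fin k → ℕ}

noncomputable def basis (hu : IsGenTuple f u t) : Module.Basis (Σ i, Fin (t i)) K V :=
  hu.2.collectedBasis fun i => (hu.1 i).basis

lemma basis_apply (hu : IsGenTuple f u t) (p : Σ i, Fin (t i)) :
    hu.basis p = (f ^ (p.2 : ℕ)) (u p.1) := by
  simp [basis, ExpEq.coe_basis]

noncomputable def shift (hu : IsGenTuple f u t) (m j : Fin k) : Module.End K V :=
  hu.basis.constr K fun p => if p.1 = m then (f ^ (p.2 : ℕ)) (u j) else 0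

lemma shift_basis (hu : IsGenTuple f u t) (m j : Fin k) (p : Σ i, Fin (t i)) :
    hu.shift m j (hu.basis p) = if p.1 = m then (f ^ (p.2 : ℕ)) (u j) else 0 :=
  hu.basis.constr_basis K _ p

lemma shift_pow_apply_of_ne (hu : IsGenTuple f u t) {i m : Fin k} (j : Fin k) (him : i ≠ m)
    (n : ℕ) : hu.shift m j ((f ^ n) (u i)) = 0 := by
  rcases lt_or_ge n (t i) with hn | hn
  · simpa [hu.basis_apply, him] using hu.shift_basis m j ⟨i, n, hn⟩
  · rw [(hu.1 i).pow_apply_eq_zero hn, map_zero]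

lemma shift_pow_apply_self (hu : IsGenTuple f u t) {m j : Fin k} (h : t j ≤ t m) (n : ℕ) :
    hu.shift m j ((f ^ n) (u m)) = (f ^ n) (u j) := by
  rcases lt_or_ge n (t m) with hn | hn
  · simpa [hu.basis_apply] using hu.shift_basis m j ⟨m, n, hn⟩
  · rw [(hu.1 m).pow_apply_eq_zero hn, map_zero, (hu.1 j).pow_apply_eq_zero (h.trans hn)]

lemma commute_shift (hu : IsGenTuple f u t) {m j : Fin k} (h : t j ≤ t m) :
    Commute (hu.shift m j) f := by
  refine hu.basis.ext fun ⟨i, l⟩ => ?_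
  change hu.shift m j (f (hu.basis ⟨i, l⟩)) = f (hu.shift m j (hu.basis ⟨i, l⟩))
  rw [hu.basis_apply, ← Module.End.mul_apply f, ← pow_succ']
  by_cases him : i = m
  · subst him
    rw [hu.shift_pow_apply_self h, hu.shift_pow_apply_self h, pow_succ', Module.End.mul_apply]
  · rw [hu.shift_pow_apply_of_ne j him, hu.shift_pow_apply_of_ne j him, map_zero]

lemma shift_mul_shift_of_ne (hu : IsGenTuple f u t) {a b c j : Fin k} (h : j ≠ a) :
    hu.shift a b * hu.shift c j = 0 := by
  refine hu.basis.ext fun p => ?_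
  rw [Module.End.mul_apply, shift_basis]
  split_ifs <;> simp [hu.shift_pow_apply_of_ne b h]

lemma shift_mul_shift_self (hu : IsGenTuple f u t) {b c j : Fin k} (h : t b ≤ t j) :
    hu.shift j b * hu.shift c j = hu.shift c b := by
  refine hu.basis.ext fun p => ?_
  rw [Module.End.mul_apply, shift_basis, shift_basis]
  split_ifs <;> simp [hu.shift_pow_apply_self h]

lemma shift_apply_mem (hu : IsGenTuple f u t) (m j : Fin k) (y : V) :
    hu.shift m j y ∈ cyc f (u j) := by
  have hy : hu.shift m j y ∈ range (hu.shift m j) := ⟨y, rfl⟩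
  rw [shift, Module.Basis.constr_range] at hy
  refine Submodule.span_le.2 ?_ hy
  rintro _ ⟨p, rfl⟩
  dsimp only
  split_ifs
  · exact pow_apply_mem_cyc f (u j) _
  · exact Submodule.zero_mem _

lemma sum_shift_self (hu : IsGenTuple f u t) : ∑ i, hu.shift i i = 1 := by
  refine hu.basis.ext fun p => ?_
  simp only [LinearMap.sum_apply, shift_basis]
  simp [hu.basis_apply]

lemma sum_shift_self_apply (hu : IsGenTuple f u t) (y : V) : ∑ i, hu.shift i i y = y := by
  rw [← LinearMap.sum_apply, hu.sum_shift_self, Module.End.one_apply]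

lemma shift_apply_of_mem_ne (hu : IsGenTuple f u t) {i m : Fin k} (j : Fin k) (him : i ≠ m)
    {z : V} (hz : z ∈ cyc f (u i)) : hu.shift m j z = 0 := by
  refine (Submodule.span_le.2 ?_ : cyc f (u i) ≤ ker (hu.shift m j)) hz
  rintro _ ⟨n, rfl⟩
  exact hu.shift_pow_apply_of_ne j him n

lemma shift_self_apply_of_mem (hu : IsGenTuple f u t) {i : Fin k} {z : V} (hz : z ∈ cyc f (u i)) :
    hu.shift i i z = z := by
  refine (Submodule.span_le.2 ?_ : cyc f (u i) ≤ eqLocus (hu.shift i i) 1) hz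
  rintro _ ⟨n, rfl⟩
  exact hu.shift_pow_apply_self le_rfl n

end IsGenTuple

lemma Chinv.apply_mem_of_mul_self_eq_zero {f N : Module.End K V} {X : Submodule K V}
    (hX : Chinv f X) (hN : N * N = 0) (hNf : Commute N f) {x : V} (hx : x ∈ X) : N x ∈ X := by
  let α : V ≃ₗ[K] V := LinearEquiv.ofLinearMap (1 + N) (1 - N)
    (show (1 + N) * (1 - N) = 1 by noncomm_ring [hN])
    (show (1 - N) * (1 + N) = 1 by noncomm_ring [hN])
  have hα : (1 + N) x ∈ X := hX.2 α ((Commute.one_left f).add_left hNf) ▸ ⟨x, hx, rfl⟩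
  simpa using X.sub_mem hα hx

namespace IsGenTuple

variable {f : Module.End K V} {k : ℕ} {u : Fin k → V} {t : Fin k → ℕ} {X : Submodule K V}

lemma mem_iSup_inf_cyc (hu : IsGenTuple f u t) {y : V} (hy : ∀ i, hu.shift i i y ∈ X) :
    y ∈ ⨆ i, X ⊓ cyc f (u i) := by
  rw [← hu.sum_shift_self_apply y]
  exact Submodule.sum_mem _ fun i _ =>
    Submodule.mem_iSup_of_mem i ⟨hy i, hu.shift_apply_mem i i y⟩

lemma le_iSup_inf_cyc (hu : IsGenTuple f u t) {W : Submodule K V} (hW : Hinv f W) (hWX : W ≤ X) :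
    W ≤ ⨆ i, X ⊓ cyc f (u i) :=
  fun w hw => hu.mem_iSup_inf_cyc fun _ => hWX (hW _ (hu.commute_shift le_rfl) ⟨w, hw, rfl⟩)

lemma shift_apply_of_mem_subU_of_ne (hu : IsGenTuple f u t) {m : Fin k} (j : Fin k) {a : ℕ}
    (hm : t m ≠ a) {y : V} (hy : y ∈ subU f u t a) : hu.shift m j y = 0 :=
  (iSup₂_le fun i hi _ hz => hu.shift_apply_of_mem_ne j (by rintro rfl; exact hm hi) hz :
    subU f u t a ≤ ker (hu.shift m j)) hy

lemma shift_self_apply_of_mem_subU (hu : IsGenTuple f u t) {j : Fin k} {a : ℕ}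
    (hj : ∀ i ≠ j, t i ≠ a) {y : V} (hy : y ∈ subU f u t a) : hu.shift j j y = y :=
  calc hu.shift j j y = ∑ i, hu.shift i i y := (Finset.sum_eq_single j
        (fun i _ hij => hu.shift_apply_of_mem_subU_of_ne i (hj i hij) hy) (by simp)).symm
    _ = y := hu.sum_shift_self_apply y

lemma shift_self_apply_mem_of_mem_subU (hu : IsGenTuple f u t) (hX : Chinv f X) {a : ℕ} {y : V}
    (hyX : y ∈ X) (hyU : y ∈ subU f u t a) (j : Fin k) : hu.shift j j y ∈ X := by
  rcases ne_or_eq (t j) a with hja | rfl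
  · rw [hu.shift_apply_of_mem_subU_of_ne j hja hyU]
    exact X.zero_mem
  by_cases hpair : ∃ m ≠ j, t m = t j
  · obtain ⟨m, hmj, htm⟩ := hpair
    rw [← hu.shift_mul_shift_self htm.ge, Module.End.mul_apply]
    refine hX.apply_mem_of_mul_self_eq_zero (hu.shift_mul_shift_of_ne hmj.symm)
      (hu.commute_shift htm.ge) ?_
    exact hX.apply_mem_of_mul_self_eq_zero (hu.shift_mul_shift_of_ne hmj)
      (hu.commute_shift htm.le) hyX
  · push Not at hpair
    rwa [hu.shift_self_apply_of_mem_subU hpair hyU]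

lemma iSup_inf_subU_eq (hu : IsGenTuple f u t) (hX : Chinv f X) :
    ⨆ a ∈ Set.range t, X ⊓ subU f u t a = ⨆ i, X ⊓ cyc f (u i) := by
  refine le_antisymm (iSup₂_le fun a _ y hy => ?_) (iSup_le fun i => ?_)
  · exact hu.mem_iSup_inf_cyc (hu.shift_self_apply_mem_of_mem_subU hX hy.1 hy.2)
  · refine le_trans ?_ (le_iSup₂_of_le (t i) ⟨i, rfl⟩ le_rfl)
    exact inf_le_inf_left X (le_biSup (fun i => cyc f (u i)) (rfl : t i = t i))

lemma shift_self_apply_mem_of_commute (hu : IsGenTuple f u t) (hX : Chinv f X)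
    {g : Module.End K V} (hg : Commute g f) {i : Fin k} {z : V} (hzX : z ∈ X)
    (hz : z ∈ cyc f (u i)) (j : Fin k) : hu.shift j j (g z) ∈ X := by
  have hπ : ∀ m, Commute (hu.shift m m) f := fun m => hu.commute_shift le_rfl
  by_cases hij : i = j
  · subst hij
    obtain ⟨p, hp⟩ := mem_cyc_iff.1 (hu.shift_apply_mem i i (g (u i)))
    have heq : hu.shift i i (g z) = Polynomial.aeval f p z :=
      cyc_le_eqLocus ((hπ i).mul_left hg) (commute_aeval f p) hp.symm hz
    rw [heq]
    exact cyc_le_of_mem hX.1 hzX (mem_cyc_iff.2 ⟨p, rfl⟩)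
  · have hN : hu.shift j j * g * hu.shift i i * (hu.shift j j * g * hu.shift i i) = 0 := by
      simp only [mul_assoc]
      rw [← mul_assoc (hu.shift i i), hu.shift_mul_shift_of_ne (Ne.symm hij), zero_mul,
        mul_zero, mul_zero]
    have := hX.apply_mem_of_mul_self_eq_zero hN (((hπ j).mul_left hg).mul_left (hπ i)) hzX
    rwa [Module.End.mul_apply, Module.End.mul_apply, hu.shift_self_apply_of_mem hz] at this

lemma hinv_iSup_inf_cyc (hu : IsGenTuple f u t) (hX : Chinv f X) :
    Hinv f (⨆ i, X ⊓ cyc f (u i)) := by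
  intro g hg
  rw [Submodule.map_iSup]
  refine iSup_le fun i => ?_
  rintro _ ⟨z, ⟨hzX, hz⟩, rfl⟩
  exact hu.mem_iSup_inf_cyc (hu.shift_self_apply_mem_of_commute hX hg hzX hz)

end IsGenTuple

theorem stmt7_general (f : V →ₗ[K] V)
    {k : ℕ} (u : Fin k → V) (t : Fin k → ℕ) (hu : IsGenTuple f u t)
    (X : Submodule K V) (hX : Chinv f X) :
    IsGreatest {W : Submodule K V | Hinv f W ∧ W ≤ X}
      (⨆ a ∈ Set.range t, X ⊓ subU f u t a) := by
  rw [hu.iSup_inf_subU_eq hX]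
  exact ⟨⟨hu.hinv_iSup_inf_cyc hX, iSup_le fun _ => inf_le_left⟩,
    fun W hW => hu.le_iSup_inf_cyc hW.1 hW.2⟩

theorem stmt7 [FiniteDimensional K V] (f : V →ₗ[K] V) (hf : IsNilpotent f)
    {k : ℕ} (u : Fin k → V) (t : Fin k → ℕ) (ht : Monotone t) (hu : IsGenTuple f u t)
    (X : Submodule K V) (hX : Chinv f X) :
    IsGreatest {W : Submodule K V | Hinv f W ∧ W ≤ X}
      (⨆ a ∈ Set.range t, X ⊓ subU f u t a) :=
  stmt7_general f u t hu X hX
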